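/- Normalize the measure of 𝕋 to total mass 1 and let U ∈ H²(𝕋, ℂ^{d×d}) be Hermitian-valued. Then, with 𝟏 the identity matrix viewed as a constant function in ℋ: (i) 𝓜_{−1}(U) := ∫_𝕋 L_U(𝟏) dx = −⟨U⟩; (ii) 𝓜_0(U) := ∫_𝕋 L_U²(𝟏) dx = (1/2)⟨U² − i U H U⟩ + (1/2)⟨U⟩². -/

import Mathlib

open MeasureTheory Complex Matrix
open scoped Real

noncomputable section

instance : Fact (0 < 2 * Real.pi) := ⟨by positivity⟩

/-- The torus `ℝ / 2πℤ`. -/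
abbrev Torus := AddCircle (2 * Real.pi)

/-- `d × d` complex matrices. -/
abbrev Mat (d : ℕ) := Matrix (Fin d) (Fin d) ℂ

/-- Normalized Haar measure (total mass 1) on the torus. -/
abbrev μT : Measure Torus := AddCircle.haarAddCircle

variable {d : ℕ}

/-- Entrywise `n`-th Fourier coefficient of a matrix-valued function on the torus. -/
def mcoeff (f : Torus → Mat d) (n : ℤ) : Mat d :=
  Matrix.of fun i j => fourierCoeff (fun x => f x i j) n

/-- `f ∈ L²(𝕋, ℂ^{d×d})`. -/
def InL2 (f : Torus → Mat d) : Prop :=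
  ∀ i j, MemLp (fun x => f x i j) 2 μT

/-- `f ∈ L^∞(𝕋, ℂ^{d×d})`. -/
def InLinf (f : Torus → Mat d) : Prop :=
  ∀ i j, MemLp (fun x => f x i j) ⊤ μT

/-- `f` belongs to the Sobolev space `H^k(𝕋, ℂ^{d×d})` (Fourier characterization). -/
def InHk (k : ℕ) (f : Torus → Mat d) : Prop :=
  InL2 f ∧ ∀ i j, Summable fun n : ℤ =>
    (n : ℝ) ^ (2 * k) * ‖fourierCoeff (fun x => f x i j) n‖ ^ 2

/-- `f` belongs to the Hardy space `ℋ = L²₊(𝕋, ℂ^{d×d})`: it is `L²` and all its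
negatively indexed Fourier coefficients vanish. -/
def IsHardy (f : Torus → Mat d) : Prop :=
  InL2 f ∧ ∀ n : ℤ, n < 0 → mcoeff f n = 0

/-- `g = Π_{≥0} f`, the Szegő projection of `f` onto the Hardy space. -/
def ProjPosOf (f g : Torus → Mat d) : Prop :=
  InL2 g ∧ ∀ n : ℤ, mcoeff g n = if 0 ≤ n then mcoeff f n else 0

/-- `g = Π_{<0} f = (Id - Π_{≥0}) f`. -/
def ProjNegOf (f g : Torus → Mat d) : Prop :=
  InL2 g ∧ ∀ n : ℤ, mcoeff g n = if n < 0 then mcoeff f n else 0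

/-- `g = ∂ₓ f`. -/
def DerivXOf (f g : Torus → Mat d) : Prop :=
  InL2 g ∧ ∀ n : ℤ, mcoeff g n = (Complex.I * (n : ℂ)) • mcoeff f n

/-- `g = D f` where `D = (1/i) ∂ₓ`. -/
def DOf (f g : Torus → Mat d) : Prop :=
  InL2 g ∧ ∀ n : ℤ, mcoeff g n = (n : ℂ) • mcoeff f n

/-- `g = |D| f`, the Fourier multiplier with symbol `|n|`. -/
def AbsDOf (f g : Torus → Mat d) : Prop :=
  InL2 g ∧ ∀ n : ℤ, mcoeff g n = ((|n| : ℤ) : ℂ) • mcoeff f n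

/-- `g = H f`, the Hilbert transform `H = i · sign(D)` (so that `H ∂ₓ = -|D|`). -/
def HilbertOf (f g : Torus → Mat d) : Prop :=
  InL2 g ∧ ∀ n : ℤ, mcoeff g n = (Complex.I * ((n.sign : ℤ) : ℂ)) • mcoeff f n

/-- `g = T_u f = Π_{≥0}(u f)`, the Toeplitz operator of symbol `u` applied to `f`. -/
def ToeplitzOf (u f g : Torus → Mat d) : Prop :=
  ProjPosOf (fun x => u x * f x) g

/-- `g = L_u f = D f - T_u f`, the Lax operator applied to `f`. -/
def LaxOf (u f g : Torus → Mat d) : Prop :=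
  ∃ df tf, DOf f df ∧ ToeplitzOf u f tf ∧ ∀ᵐ x ∂μT, g x = df x - tf x

/-- `g = L_u^n f`, iterates of the Lax operator. -/
def LaxIterOf (u : Torus → Mat d) : ℕ → (Torus → Mat d) → (Torus → Mat d) → Prop
  | 0, f, g => ∀ᵐ x ∂μT, g x = f x
  | n + 1, f, g => ∃ h, LaxIterOf u n f h ∧ LaxOf u h g

/-- `g = B_u f = i (T_{|D|u} - T_u²) f`. -/
def BOf (u f g : Torus → Mat d) : Prop :=
  ∃ w t1 t2 t3, AbsDOf u w ∧ ToeplitzOf w f t1 ∧ ToeplitzOf u f t2 ∧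
    ToeplitzOf u t2 t3 ∧ ∀ᵐ x ∂μT, g x = Complex.I • (t1 x - t3 x)

/-- The inner product `⟨f|g⟩ = ∫ tr (f g*)` on `L²(𝕋, ℂ^{d×d})`. -/
def hinner (f g : Torus → Mat d) : ℂ :=
  ∫ x, (f x * (g x)ᴴ).trace ∂μT

/-- The mean value `⟨f⟩` of a matrix-valued function on the torus (whose measure is
normalized to total mass 1). -/
def mint (f : Torus → Mat d) : Mat d :=
  Matrix.of fun i j => ∫ x, f x i j ∂μT

/-- Squared (Frobenius) norm of a matrix. -/
def matNormSq (M : Mat d) : ℝ := ∑ i, ∑ j, ‖M i j‖ ^ 2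

/-- Squared Sobolev `H^k` norm, via Fourier coefficients (for `k = 0` this is the
squared `L²` norm, by Parseval). -/
def sobNormSq (k : ℕ) (f : Torus → Mat d) : ℝ :=
  ∑' n : ℤ, (1 + (n : ℝ) ^ 2) ^ k * matNormSq (mcoeff f n)

/-- `f` takes Hermitian values (a.e.). -/
def IsHermitianValued (f : Torus → Mat d) : Prop :=
  ∀ᵐ x ∂μT, (f x)ᴴ = f x

/-- `t ↦ U t` is continuous from `I` into `H^k(𝕋, ℂ^{d×d})`. -/
def ContInHk (k : ℕ) (I : Set ℝ) (U : ℝ → Torus → Mat d) : Prop :=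
  ∀ t ∈ I, ∀ ε > 0, ∃ δ > 0, ∀ s ∈ I, |s - t| < δ →
    sobNormSq k (fun x => U s x - U t x) < ε

/-- `V = ∂ₜ U` on `I`, in the sense of differentiability in `L²(𝕋, ℂ^{d×d})`. -/
def HasL2DerivOn (I : Set ℝ) (U V : ℝ → Torus → Mat d) : Prop :=
  ∀ t ∈ I, ∀ ε > 0, ∃ δ > 0, ∀ s ∈ I, |s - t| < δ →
    sobNormSq 0 (fun x => U s x - U t x - (s - t) • V t x) ≤ ε * (s - t) ^ 2

/-- `U`, with time derivative `∂ₜ U = V`, solves the spin Benjamin–Ono equation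
`∂ₜ U = ∂ₓ (|D|U - U²) - i [U, |D|U]` on the time interval `I`. -/
def SolvesSBO (I : Set ℝ) (U V : ℝ → Torus → Mat d) : Prop :=
  ∀ t ∈ I, ∀ w g : Torus → Mat d, AbsDOf (U t) w →
    DerivXOf (fun x => w x - U t x * U t x) g →
    ∀ᵐ x ∂μT, V t x = g x - Complex.I • (U t x * w x - w x * U t x)

/-!
Both means are zeroth Fourier coefficients. Since `D` kills the zero mode and `Π_{≥0}` keeps it,
`⟨L_U F⟩ = -⟨U F⟩` for every `F`; with `F = 𝟏` this is (i). As `D𝟏 = 0`, `L_U 𝟏 = -Π_{≥0} U`, so (ii)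
asks for `⟨U Π_{≥0} U⟩`. The Hilbert transform has symbol `i sign n`, hence coefficientwise
`(1 - iH) U + ⟨U⟩ = 2 Π_{≥0} U`, and the polarized Parseval identity `⟨f g⟩ = ∑ f̂(-n) ĝ(n)` turns
this into `2 ⟨U Π_{≥0} U⟩ = ⟨U (U - iHU)⟩ + ⟨U⟩²`.
-/

open scoped InnerProductSpace ComplexConjugate

section FourierCoeff

open AddCircle

variable {T : ℝ} [Fact (0 < T)]

lemma fourierCoeff_const (c : ℂ) (n : ℤ) :
    fourierCoeff (fun _ : AddCircle T => c) n = if n = 0 then c else 0 := by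
  have h : (fun _ : AddCircle T => c) = c • ⇑(fourier (T := T) 0) := by
    ext x; simp
  rw [h, fourierCoeff.const_smul, fourierCoeff_fourier]
  rcases eq_or_ne n 0 with rfl | hn <;> simp [*]

lemma fourierCoeff_sub {f g : AddCircle T → ℂ} (hf : Integrable f haarAddCircle)
    (hg : Integrable g haarAddCircle) (n : ℤ) :
    fourierCoeff (fun x => f x - g x) n = fourierCoeff f n - fourierCoeff g n := by
  simp only [fourierCoeff, smul_sub]
  exact integral_sub (hf.fourier_smul (-n)) (hg.fourier_smul (-n))

lemma fourierCoeff_conj (f : AddCircle T → ℂ) (n : ℤ) :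
    fourierCoeff (fun x => conj (f x)) n = conj (fourierCoeff f (-n)) := by
  rw [fourierCoeff, fourierCoeff, ← integral_conj]
  congr 1 with t
  simp [smul_eq_mul]

lemma hasSum_fourierCoeff_neg_mul {f g : AddCircle T → ℂ} (hf : MemLp f 2 haarAddCircle)
    (hg : MemLp g 2 haarAddCircle) :
    HasSum (fun n : ℤ => fourierCoeff f (-n) * fourierCoeff g n)
      (∫ x, f x * g x ∂haarAddCircle) := by
  have hf' : MemLp (fun x => conj (f x)) 2 haarAddCircle := hf.star
  have hF (n : ℤ) : ⟪hf'.toLp, fourierBasis (T := T) n⟫_ℂ = fourierCoeff f (-n) := by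
    rw [← inner_conj_symm, ← fourierBasis.repr_apply_apply, fourierBasis_repr,
      fourierCoeff_congr_ae hf'.coeFn_toLp, fourierCoeff_conj, conj_conj]
  have hG (n : ℤ) : ⟪fourierBasis (T := T) n, hg.toLp⟫_ℂ = fourierCoeff g n := by
    rw [← fourierBasis.repr_apply_apply, fourierBasis_repr, fourierCoeff_congr_ae hg.coeFn_toLp]
  have hFG : ⟪hf'.toLp, hg.toLp⟫_ℂ = ∫ x, f x * g x ∂haarAddCircle := by
    rw [L2.inner_def]
    refine integral_congr_ae ?_
    filter_upwards [hf'.coeFn_toLp, hg.coeFn_toLp] with x h1 h2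
    simp [h1, h2, mul_comm]
  simpa only [hF, hG, hFG] using fourierBasis.hasSum_inner_mul_inner hf'.toLp hg.toLp

end FourierCoeff

lemma InL2.integrable {f : Torus → Mat d} (hf : InL2 f) (i j : Fin d) :
    Integrable (fun x => f x i j) μT :=
  (hf i j).integrable one_le_two

lemma InL2.sub {f g : Torus → Mat d} (hf : InL2 f) (hg : InL2 g) :
    InL2 fun x => f x - g x :=
  fun i j => (hf i j).sub (hg i j)

lemma InL2.const_smul {f : Torus → Mat d} (hf : InL2 f) (c : ℂ) :
    InL2 fun x => c • f x :=
  fun i j => (hf i j).const_smul c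

lemma InL2.congr_ae {f g : Torus → Mat d} (hf : InL2 f) (h : ∀ᵐ x ∂μT, g x = f x) : InL2 g :=
  fun i j => (hf i j).ae_eq (h.mono fun x hx => by simp only [hx])

lemma mcoeff_congr_ae {f g : Torus → Mat d} (h : ∀ᵐ x ∂μT, f x = g x) (n : ℤ) :
    mcoeff f n = mcoeff g n := by
  ext i j
  exact congrFun (fourierCoeff_congr_ae (h.mono fun x hx => by rw [hx])) n

lemma mcoeff_sub {f g : Torus → Mat d} (hf : InL2 f) (hg : InL2 g) (n : ℤ) :
    mcoeff (fun x => f x - g x) n = mcoeff f n - mcoeff g n := by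
  ext i j
  exact fourierCoeff_sub (hf.integrable i j) (hg.integrable i j) n

lemma mcoeff_const_smul (f : Torus → Mat d) (c : ℂ) (n : ℤ) :
    mcoeff (fun x => c • f x) n = c • mcoeff f n := by
  ext i j
  exact fourierCoeff.const_mul (fun x => f x i j) c n

lemma mcoeff_neg (f : Torus → Mat d) (n : ℤ) : mcoeff (fun x => -f x) n = -mcoeff f n := by
  simpa using mcoeff_const_smul f (-1) n

lemma mcoeff_const (c : Mat d) (n : ℤ) :
    mcoeff (fun _ => c) n = if n = 0 then c else 0 := by
  ext i j
  rw [mcoeff, of_apply, fourierCoeff_const]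
  split_ifs <;> rfl

lemma mint_eq_mcoeff_zero (f : Torus → Mat d) : mint f = mcoeff f 0 := by
  ext i j
  simp [mint, mcoeff, fourierCoeff]

lemma mint_neg (f : Torus → Mat d) : mint (fun x => -f x) = -mint f := by
  ext i j
  exact integral_neg _

lemma hasSum_mcoeff_neg_mul {f g : Torus → Mat d} (hf : InL2 f) (hg : InL2 g) :
    HasSum (fun n : ℤ => mcoeff f (-n) * mcoeff g n) (mint fun x => f x * g x) := by
  refine Pi.hasSum.2 fun i => Pi.hasSum.2 fun j => ?_
  have hint (k : Fin d) : Integrable (fun x => f x i k * g x k j) μT :=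
    (hf i k).integrable_mul (hg k j)
  simp only [mint, of_apply, mul_apply, integral_finsetSum _ fun k _ => hint k]
  exact hasSum_sum fun k _ => hasSum_fourierCoeff_neg_mul (hf i k) (hg k j)

lemma LaxOf.inL2 {u f g : Torus → Mat d} (h : LaxOf u f g) : InL2 g := by
  obtain ⟨df, tf, hdf, htf, hg⟩ := h
  exact (hdf.1.sub htf.1).congr_ae hg

lemma LaxOf.mcoeff_eq {u f g : Torus → Mat d} (h : LaxOf u f g) (n : ℤ) :
    mcoeff g n = (n : ℂ) • mcoeff f n - if 0 ≤ n then mcoeff (fun x => u x * f x) n else 0 := by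
  obtain ⟨df, tf, hdf, htf, hg⟩ := h
  rw [mcoeff_congr_ae hg, mcoeff_sub hdf.1 htf.1, hdf.2, htf.2]

lemma LaxOf.mint_eq {u f g : Torus → Mat d} (h : LaxOf u f g) :
    mint g = -mint fun x => u x * f x := by
  simp [mint_eq_mcoeff_zero, h.mcoeff_eq]

lemma LaxOf.projPosOf_neg_of_one {u g : Torus → Mat d} (h : LaxOf u (fun _ => 1) g) :
    ProjPosOf u fun x => -g x := by
  refine ⟨fun i j => (h.inL2 i j).neg, fun n => ?_⟩
  rw [mcoeff_neg, h.mcoeff_eq, mcoeff_const]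
  rcases eq_or_ne n 0 with rfl | hn <;> simp [*]

lemma ProjPosOf.two_smul_mcoeff {g p hg : Torus → Mat d} (hp : ProjPosOf g p)
    (hh : HilbertOf g hg) (hgL2 : InL2 g) (n : ℤ) :
    (2 : ℂ) • mcoeff p n
      = mcoeff (fun x => g x - I • hg x) n + if n = 0 then mcoeff g 0 else 0 := by
  rw [mcoeff_sub hgL2 (hh.1.const_smul I), mcoeff_const_smul, hh.2, hp.2, smul_smul]
  rcases lt_trichotomy n 0 with hn | rfl | hn
  · simp [hn, hn.ne, Int.sign_eq_neg_one_of_neg hn]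
  · simp only [le_refl, ↓reduceIte, Int.sign_zero, Int.cast_zero, mul_zero, zero_smul, sub_zero]
    module
  · simp only [hn.le, hn.ne', ↓reduceIte, Int.sign_eq_one_of_pos hn, Int.cast_one, mul_one, I_mul_I,
      neg_smul, one_smul, sub_neg_eq_add, add_zero]
    module

lemma ProjPosOf.two_smul_mint_mul {f g p hg : Torus → Mat d} (hp : ProjPosOf g p)
    (hh : HilbertOf g hg) (hf : InL2 f) (hgL2 : InL2 g) :
    (2 : ℂ) • mint (fun x => f x * p x)
      = mint (fun x => f x * g x - I • (f x * hg x)) + mint f * mint g := by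
  have hfw : (fun x => f x * g x - I • (f x * hg x)) = fun x => f x * (g x - I • hg x) := by
    ext1 x; rw [mul_sub, mul_smul_comm]
  have hmean : HasSum (fun n : ℤ => mcoeff f (-n) * if n = 0 then mcoeff g 0 else 0)
      (mint f * mint g) := by
    rw [mint_eq_mcoeff_zero, mint_eq_mcoeff_zero]
    simpa using hasSum_single (f := fun n : ℤ => mcoeff f (-n) * if n = 0 then mcoeff g 0 else 0)
      0 fun n hn => by simp [hn]
  refine ((hasSum_mcoeff_neg_mul hf hp.1).const_smul (2 : ℂ)).unique ?_
  rw [hfw]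
  convert (hasSum_mcoeff_neg_mul hf (hgL2.sub (hh.1.const_smul I))).add hmean using 1
  ext1 n
  rw [← mul_add, ← hp.two_smul_mcoeff hh hgL2, mul_smul_comm]

theorem M_minus_one_and_M_zero_general {d : ℕ}
    (U : Torus → Mat d) (hU : InHk 2 U) :
    (∀ L1 : Torus → Mat d, LaxOf U (fun _ => (1 : Mat d)) L1 →
        mint L1 = - mint U) ∧
    (∀ L1 L2 hu : Torus → Mat d,
        LaxOf U (fun _ => (1 : Mat d)) L1 → LaxOf U L1 L2 → HilbertOf U hu →
        mint L2 = (2 : ℂ)⁻¹ •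
          (mint (fun x => U x * U x - Complex.I • (U x * hu x)) + mint U ^ 2)) := by
  obtain ⟨hUL2, -⟩ := hU
  refine ⟨fun L1 h1 => by simpa using h1.mint_eq, fun L1 L2 hu h1 h2 hhu => ?_⟩
  rw [sq, ← h1.projPosOf_neg_of_one.two_smul_mint_mul hhu hUL2 hUL2, smul_smul,
    inv_mul_cancel₀ two_ne_zero, one_smul, h2.mint_eq, ← mint_neg]
  simp

/-- With the measure of `𝕋` normalized to total mass 1 and `U ∈ H²(𝕋, ℂ^{d×d})`
Hermitian-valued, one has
`𝓜₋₁(U) = ∫ L_U(𝟏) = -⟨U⟩` and `𝓜₀(U) = ∫ L_U²(𝟏) = ½⟨U² - iUHU⟩ + ½⟨U⟩²`. -/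
theorem M_minus_one_and_M_zero {d : ℕ} (hd : 1 ≤ d)
    (U : Torus → Mat d) (hU : InHk 2 U) (hH : IsHermitianValued U) :
    (∀ L1 : Torus → Mat d, LaxOf U (fun _ => (1 : Mat d)) L1 →
        mint L1 = - mint U) ∧
    (∀ L1 L2 hu : Torus → Mat d,
        LaxOf U (fun _ => (1 : Mat d)) L1 → LaxOf U L1 L2 → HilbertOf U hu →
        mint L2 = (2 : ℂ)⁻¹ •
          (mint (fun x => U x * U x - Complex.I • (U x * hu x)) + mint U ^ 2)) :=
  M_minus_one_and_M_zero_general U hU
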